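/- The function f(u) = c · u²/ũ − d · ũ(1 + log(u/ũ)), for fixed constants c > 0, d ≥ 0 and fixed ũ > 0, is convex on (0, ∞) and attains its global minimum at u = ũ · sqrt(d/(2c)) when d > 0. -/

import Mathlib

/-!
Up to an additive constant, `f u = (c / v) u² - d v log u`, a nonnegative combination of the
convex functions `u²` and `-log u`. Its critical point `w` satisfies `2 (c / v) w² = d v`, and
there the tangent-line bound `log x ≤ x - 1` for the logarithm shows `f w ≤ f u` directly.
-/

open Real Set

lemma convexOn_mul_sq_sub_mul_log {a b : ℝ} (ha : 0 ≤ a) (hb : 0 ≤ b) :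
    ConvexOn ℝ (Ioi 0) (fun u : ℝ => a * u ^ 2 - b * log u) := by
  have hsq : ConvexOn ℝ (Ioi 0) (fun u : ℝ => a • u ^ 2) :=
    ((convexOn_pow 2).subset Ioi_subset_Ici_self (convex_Ioi 0)).smul ha
  have hlog : ConvexOn ℝ (Ioi 0) (fun u : ℝ => -(b • log u)) :=
    (strictConcaveOn_log_Ioi.concaveOn.smul hb).neg
  refine (hsq.add hlog).congr fun u _ => ?_
  simp only [Pi.add_apply, smul_eq_mul, sub_eq_add_neg]

lemma mul_sq_sub_mul_log_le {a b w u : ℝ} (ha : 0 ≤ a) (hw : 0 < w) (hu : 0 < u)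
    (hcrit : 2 * a * w ^ 2 = b) :
    a * w ^ 2 - b * log w ≤ a * u ^ 2 - b * log u := by
  have hb : 0 ≤ b := hcrit ▸ by positivity
  have hlog : log u - log w ≤ u / w - 1 := by
    rw [← log_div hu.ne' hw.ne']
    exact log_le_sub_one_of_pos (div_pos hu hw)
  have htangent : b * (u / w - 1) = 2 * a * w * (u - w) := by
    rw [← hcrit]
    field_simp
  suffices b * (log u - log w) ≤ a * (u ^ 2 - w ^ 2) by linarith
  calc b * (log u - log w) ≤ b * (u / w - 1) := mul_le_mul_of_nonneg_left hlog hb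
    _ = 2 * a * w * (u - w) := htangent
    _ ≤ a * (u ^ 2 - w ^ 2) := by nlinarith [mul_nonneg ha (sq_nonneg (u - w))]

lemma mul_sq_div_sub_mul_one_add_log_div {c d v u : ℝ} (hv : 0 < v) (hu : 0 < u) :
    c * u ^ 2 / v - d * v * (1 + log (u / v)) =
      (c / v) * u ^ 2 - (d * v) * log u + d * v * (log v - 1) := by
  rw [log_div hu.ne' hv.ne']
  ring

theorem aux_entry_convex_and_min (c d v : ℝ) (hc : 0 < c) (hd : 0 ≤ d) (hv : 0 < v) :
    ConvexOn ℝ (Set.Ioi (0 : ℝ))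
      (fun u : ℝ => c * u ^ 2 / v - d * v * (1 + Real.log (u / v))) ∧
    (0 < d → ∀ u ∈ Set.Ioi (0 : ℝ),
      c * (v * Real.sqrt (d / (2 * c))) ^ 2 / v
        - d * v * (1 + Real.log ((v * Real.sqrt (d / (2 * c))) / v))
      ≤ c * u ^ 2 / v - d * v * (1 + Real.log (u / v))) := by
  constructor
  · refine ((convexOn_mul_sq_sub_mul_log (div_pos hc hv).le (mul_nonneg hd hv.le)).add_const
      (d * v * (log v - 1))).congr fun u hu => ?_
    exact (mul_sq_div_sub_mul_one_add_log_div hv hu).symm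
  · intro hd_pos u hu
    have hw : 0 < v * √(d / (2 * c)) := mul_pos hv (sqrt_pos.2 (by positivity))
    have hcrit : 2 * (c / v) * (v * √(d / (2 * c))) ^ 2 = d * v := by
      rw [mul_pow, sq_sqrt (by positivity)]
      field_simp
    rw [mul_sq_div_sub_mul_one_add_log_div hv hu, mul_sq_div_sub_mul_one_add_log_div hv hw]
    linarith [mul_sq_sub_mul_log_le (div_pos hc hv).le hw hu hcrit]
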